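/- Let G be a connected simple graph on a finite vertex set V, let M ∈ ℕ, let V' ⊆ V, and let f' : V' → ℤ. Then the following are equivalent: (1) there exist a root r ∈ V and an M-Lipschitz mapping f of (G, r) whose restriction to V' equals f'; (2) either f' is M-reachable and rooted (i.e., 0 ∈ f'(V')), or there exists a vertex r ∈ V \ V' such that the extension of f' to V' ∪ {r} sending r to 0 is M-reachable. -/

import Mathlib

/-!
Along a shortest path every edge changes an `M`-Lipschitz mapping by at most `M`, so every
restriction of such a mapping is `M`-reachable; whether the root lies in `V'` or not decides
which alternative of (2) holds. Conversely, an `M`-reachable partial mapping `g` on a nonempty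
set `S` extends by the McShane formula `f v = min_{u ∈ S} (g u + M · d(u, v))`: reachability
makes `f` agree with `g` on `S`, and since `d(u, ·)` changes by at most one along an edge, `f`
is `M`-Lipschitz. Putting the root into the domain (as the value `0`) makes the extension
rooted.
-/

lemma Set.EqOn.update_union_singleton {α β : Type*} [DecidableEq α] {f g : α → β} {s : Set α}
    {a : α} (h : Set.EqOn f g s) (ha : a ∉ s) :
    Set.EqOn (Function.update f a (g a)) g (s ∪ {a}) := by
  rintro x (hx | rfl)
  · rw [Function.update_of_ne (ne_of_mem_of_not_mem hx ha), h hx]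
  · exact Function.update_self ..

namespace SimpleGraph

variable {V : Type*} {G : SimpleGraph V}

lemma Walk.abs_sub_le_mul_length {f : V → ℤ} {M : ℤ} (hf : ∀ u v, G.Adj u v → |f u - f v| ≤ M)
    {u v : V} (p : G.Walk u v) : |f u - f v| ≤ M * p.length := by
  induction p with
  | nil => simp
  | @cons a b c hab q ih =>
    calc |f a - f c| ≤ |f a - f b| + |f b - f c| := abs_sub_le _ _ _
      _ ≤ M + M * q.length := add_le_add (hf a b hab) ih
      _ = M * (q.cons hab).length := by push_cast [Walk.length_cons]; ring

lemma Reachable.abs_sub_le_mul_dist {f : V → ℤ} {M : ℤ}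
    (hf : ∀ u v, G.Adj u v → |f u - f v| ≤ M) {u v : V} (h : G.Reachable u v) :
    |f u - f v| ≤ M * G.dist u v := by
  obtain ⟨p, hp⟩ := h.exists_walk_length_eq_dist
  rw [← hp]
  exact p.abs_sub_le_mul_length hf

variable (G) in
noncomputable def mcShaneExtension (S : Finset V) (hS : S.Nonempty) (M : ℕ) (g : V → ℤ)
    (v : V) : ℤ :=
  S.inf' hS fun u => g u + M * G.dist u v

section McShane

variable {S : Finset V} {hS : S.Nonempty} {M : ℕ} {g : V → ℤ}

lemma mcShaneExtension_le {u : V} (hu : u ∈ S) (v : V) :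
    G.mcShaneExtension S hS M g v ≤ g u + M * G.dist u v :=
  Finset.inf'_le (fun u => g u + M * G.dist u v) hu

lemma mcShaneExtension_eq_of_mem (hg : ∀ u ∈ S, ∀ v ∈ S, |g u - g v| ≤ M * G.dist u v)
    {v : V} (hv : v ∈ S) : G.mcShaneExtension S hS M g v = g v := by
  refine le_antisymm ?_ (Finset.le_inf' _ _ fun u hu => ?_)
  · exact (mcShaneExtension_le hv v).trans_eq (by simp)
  · have := (abs_le.mp (hg v hv u hu)).2
    rw [dist_comm] at this
    linarith

lemma mcShaneExtension_le_add_of_adj {a b : V} (hab : G.Adj a b) :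
    G.mcShaneExtension S hS M g a ≤ G.mcShaneExtension S hS M g b + M := by
  obtain ⟨u, hu, hub⟩ := Finset.exists_mem_eq_inf' hS fun u => g u + M * G.dist u b
  have hdist : (G.dist u a : ℤ) ≤ G.dist u b + 1 := by
    have := hab.symm.diff_dist_adj (u := u)
    omega
  calc G.mcShaneExtension S hS M g a ≤ g u + M * G.dist u a := mcShaneExtension_le hu a
    _ ≤ g u + M * (G.dist u b + 1) := by gcongr
    _ = G.mcShaneExtension S hS M g b + M := by rw [mcShaneExtension, hub]; ring

lemma abs_sub_mcShaneExtension_le_of_adj {a b : V} (hab : G.Adj a b) :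
    |G.mcShaneExtension S hS M g a - G.mcShaneExtension S hS M g b| ≤ M :=
  abs_sub_le_iff.mpr ⟨sub_le_iff_le_add'.mpr (mcShaneExtension_le_add_of_adj hab),
    sub_le_iff_le_add'.mpr (mcShaneExtension_le_add_of_adj hab.symm)⟩

end McShane

lemma exists_lipschitz_extension [Finite V] (M : ℕ) {S : Set V} (hS : S.Nonempty) {g : V → ℤ}
    (hg : ∀ u ∈ S, ∀ v ∈ S, |g u - g v| ≤ M * G.dist u v) :
    ∃ f : V → ℤ, (∀ u v, G.Adj u v → |f u - f v| ≤ M) ∧ Set.EqOn f g S := by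
  set T := S.toFinite.toFinset
  have hT : T.Nonempty := S.toFinite.toFinset_nonempty.mpr hS
  refine ⟨G.mcShaneExtension T hT M g, fun u v => abs_sub_mcShaneExtension_le_of_adj,
    fun v hv => mcShaneExtension_eq_of_mem ?_ (S.toFinite.mem_toFinset.mpr hv)⟩
  simpa only [T, Set.Finite.mem_toFinset] using hg

end SimpleGraph

/-- Characterization of extendable partial mappings: a partial mapping `f'` on `V' ⊆ V` of a
connected graph `G` extends to an `M`-Lipschitz mapping of `(G, r)` for some root `r` if and
only if either `f'` is `M`-reachable and rooted (takes the value `0` on `V'`), or there is a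
vertex `r ∉ V'` such that extending `f'` by the value `0` at `r` yields an `M`-reachable
partial mapping on `V' ∪ {r}`. -/
theorem stmt_18 {V : Type*} [Fintype V] [DecidableEq V] (G : SimpleGraph V) (hG : G.Connected)
    (M : ℕ) (V' : Set V) (f' : V → ℤ) :
    (∃ (r : V) (f : V → ℤ), f r = 0 ∧
        (∀ u v : V, G.Adj u v → |f u - f v| ≤ (M : ℤ)) ∧ ∀ v ∈ V', f v = f' v) ↔
    ((∀ u ∈ V', ∀ v ∈ V', |f' u - f' v| ≤ (M : ℤ) * G.dist u v) ∧ (∃ v ∈ V', f' v = 0)) ∨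
      (∃ r : V, r ∉ V' ∧ ∀ u ∈ V' ∪ {r}, ∀ v ∈ V' ∪ {r},
        |Function.update f' r 0 u - Function.update f' r 0 v| ≤ (M : ℤ) * G.dist u v) := by
  constructor
  · rintro ⟨r, f, hfr, hf, hfV'⟩
    have hreach : ∀ u v, |f u - f v| ≤ M * G.dist u v := fun u v =>
      (hG.preconnected u v).abs_sub_le_mul_dist hf
    by_cases hr : r ∈ V'
    · refine .inl ⟨fun u hu v hv => ?_, r, hr, hfV' r hr ▸ hfr⟩
      rw [← hfV' u hu, ← hfV' v hv]
      exact hreach u v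
    · have hf_eq : Set.EqOn (Function.update f' r 0) f (V' ∪ {r}) :=
        hfr ▸ Set.EqOn.update_union_singleton (fun v hv => (hfV' v hv).symm) hr
      refine .inr ⟨r, hr, fun u hu v hv => ?_⟩
      rw [hf_eq hu, hf_eq hv]
      exact hreach u v
  · rintro (⟨hreach, r, hr, hr0⟩ | ⟨r, hr, hreach⟩)
    · obtain ⟨f, hf, hfV'⟩ := SimpleGraph.exists_lipschitz_extension M ⟨r, hr⟩ hreach
      exact ⟨r, f, (hfV' hr).trans hr0, hf, fun v hv => hfV' hv⟩
    · obtain ⟨f, hf, hfV'⟩ := SimpleGraph.exists_lipschitz_extension M ⟨r, .inr rfl⟩ hreach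
      refine ⟨r, f, (hfV' (.inr rfl)).trans (Function.update_self r 0 f'), hf, fun v hv => ?_⟩
      rw [hfV' (.inl hv), Function.update_of_ne (ne_of_mem_of_not_mem hv hr)]
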